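/- Let 0 → I → A →^π A/I → 0 be a short exact sequence of C*-algebras, and suppose I has a quasi-central approximate unit (p_n) consisting of projections. Let a, b be positive elements of A with π(a) ≾ π(b) in A/I. Then for every ε > 0 there exists N such that ((1−p_n) a (1−p_n) − ε)₊ ≾ (1−p_n) b (1−p_n) in A for all n ≥ N. -/

import Mathlib

open Filter Topology
open scoped ENNReal NNReal

variable {A : Type*}

/-- Cuntz subequivalence: `a ≾ b` iff `vₙ * b * vₙ* → a` for some sequence `vₙ`. -/
def CuntzSub [NonUnitalRing A] [StarRing A] [TopologicalSpace A] (a b : A) : Prop :=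
  ∃ v : ℕ → A, Tendsto (fun n => v n * b * star (v n)) atTop (nhds a)

/-- Cuntz equivalence. -/
def CuntzEquiv [NonUnitalRing A] [StarRing A] [TopologicalSpace A] (a b : A) : Prop :=
  CuntzSub a b ∧ CuntzSub b a

/-- `(a - ε)₊`, the positive part of `a - ε`, via continuous functional calculus. -/
noncomputable def cutoff [CStarAlgebra A] (ε : ℝ) (a : A) : A :=
  cfc (fun t : ℝ => max (t - ε) 0) a

/-!
Lift an approximate witness of `π a ≾ π b` to some `w ∈ A`. Clamping the spectrum of the
self-adjoint element `w b w* - a` to `[-‖π (w b w* - a)‖, ‖π (w b w* - a)‖]` shows that it lies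
within `ε` of some `c ∈ I`. Compressing by the projections `q = 1 - pₙ` makes `q c` small, and
quasi-centrality makes `(q w) (q b q) (q w)*` close to `q (w b w*) q`; hence eventually
`‖(q w) (q b q) (q w)* - q a q‖ < ε`. Rørdam's lemma (`‖x - y‖ < ε` implies `(x - ε)₊ ≾ y`)
then gives `(q a q - ε)₊ ≾ (q w) (q b q) (q w)* ≾ q b q`.
-/

section Cuntz

variable [NonUnitalRing A] [StarRing A] [TopologicalSpace A]

theorem CuntzSub.mul_mul_star (x b : A) : CuntzSub (x * b * star x) b :=
  ⟨fun _ => x, tendsto_const_nhds⟩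

theorem cuntzSub_iff_mem_closure [FrechetUrysohnSpace A] {a b : A} :
    CuntzSub a b ↔ a ∈ closure (Set.range fun x => x * b * star x) := by
  simp only [CuntzSub, mem_closure_iff_seq_limit, Set.mem_range]
  exact ⟨fun ⟨v, hv⟩ => ⟨_, fun n => ⟨v n, rfl⟩, hv⟩,
    fun ⟨y, hy, hy_lim⟩ => ⟨fun n => (hy n).choose, by simpa only [(hy _).choose_spec]⟩⟩

theorem CuntzSub.trans [FrechetUrysohnSpace A] [ContinuousMul A] [ContinuousStar A] {a b c : A}
    (hab : CuntzSub a b) (hbc : CuntzSub b c) : CuntzSub a c := by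
  rw [cuntzSub_iff_mem_closure] at *
  refine closure_minimal ?_ isClosed_closure hab
  rintro _ ⟨x, rfl⟩
  have hconj : Continuous fun y : A => x * y * star x := by fun_prop
  refine map_mem_closure (f := fun y => x * y * star x) hconj hbc ?_
  rintro _ ⟨y, rfl⟩
  exact ⟨x * y, by simp only [star_mul, mul_assoc]⟩

end Cuntz

theorem cuntzSub_iff_forall_norm_sub_lt [NonUnitalSeminormedRing A] [StarRing A] {a b : A} :
    CuntzSub a b ↔ ∀ ε > 0, ∃ v : A, ‖v * b * star v - a‖ < ε := by
  simp only [cuntzSub_iff_mem_closure, Metric.mem_closure_iff, Set.exists_range_iff,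
    dist_eq_norm', gt_iff_lt]

section Estimates

variable [NonUnitalNormedRing A] [StarRing A] [NormedStarGroup A]

theorem norm_mul_mul_star_sub_mul_mul_star_le (u v b : A) :
    ‖u * b * star u - v * b * star v‖ ≤ ‖u - v‖ * ‖b‖ * (‖u‖ + ‖v‖) := by
  have key : u * b * star u - v * b * star v = (u - v) * b * star u + v * b * star (u - v) := by
    simp only [star_sub]; noncomm_ring
  calc ‖u * b * star u - v * b * star v‖
      ≤ ‖u - v‖ * ‖b‖ * ‖u‖ + ‖v‖ * ‖b‖ * ‖u - v‖ := by
        rw [key]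
        refine (norm_add_le _ _).trans (add_le_add ?_ ?_) <;>
          refine (norm_mul₃_le ..).trans_eq ?_ <;> rw [norm_star]
    _ = ‖u - v‖ * ‖b‖ * (‖u‖ + ‖v‖) := by ring

end Estimates

section Projection

variable [NonUnitalNormedRing A] [StarRing A] [CStarRing A] {q : A}

theorem IsStarProjection.norm_mul_left_le (hq : IsStarProjection q) (x : A) : ‖q * x‖ ≤ ‖x‖ :=
  (norm_mul_le _ _).trans (mul_le_of_le_one_left (norm_nonneg _) (hq.norm_le))

theorem IsStarProjection.norm_mul_right_le (hq : IsStarProjection q) (x : A) : ‖x * q‖ ≤ ‖x‖ :=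
  (norm_mul_le _ _).trans (mul_le_of_le_one_right (norm_nonneg _) (hq.norm_le))

theorem IsStarProjection.norm_mul_mul_star_sub_corner_le (hq : IsStarProjection q) (w b : A) :
    ‖(q * w) * (q * b * q) * star (q * w) - q * (w * b * star w) * q‖ ≤
      2 * ‖w‖ * ‖b‖ * ‖w * q - q * w‖ := by
  have hqs : star q = q := hq.isSelfAdjoint.star_eq
  have hcorner : (q * w) * (q * b * q) * star (q * w) = (q * w * q) * b * star (q * w * q) := by
    simp only [star_mul, hqs, mul_assoc]
  have hrhs : q * (w * b * star w) * q = (q * w) * b * star (q * w) := by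
    simp only [star_mul, hqs, mul_assoc]
  have hdiff : q * w * q - q * w = q * (w * q - q * w) := by
    rw [mul_sub, ← mul_assoc, ← mul_assoc, hq.isIdempotentElem.eq]
  calc _ ≤ ‖q * w * q - q * w‖ * ‖b‖ * (‖q * w * q‖ + ‖q * w‖) := by
        rw [hcorner, hrhs]; exact norm_mul_mul_star_sub_mul_mul_star_le _ _ b
    _ ≤ ‖w * q - q * w‖ * ‖b‖ * (‖w‖ + ‖w‖) := by
        rw [hdiff]
        gcongr
        · exact hq.norm_mul_left_le _
        · exact (hq.norm_mul_right_le _).trans (hq.norm_mul_left_le _)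
        · exact hq.norm_mul_left_le _
    _ = 2 * ‖w‖ * ‖b‖ * ‖w * q - q * w‖ := by ring

theorem IsStarProjection.norm_corner_sub_le (hq : IsStarProjection q) (w b a c : A) :
    ‖(q * w) * (q * b * q) * star (q * w) - q * a * q‖ ≤
      2 * ‖w‖ * ‖b‖ * ‖w * q - q * w‖ + ‖w * b * star w - a - c‖ + ‖q * c‖ := by
  have split : (q * w) * (q * b * q) * star (q * w) - q * a * q =
      ((q * w) * (q * b * q) * star (q * w) - q * (w * b * star w) * q) +
        q * (w * b * star w - a - c) * q + q * c * q := by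
    noncomm_ring
  rw [split]
  refine (norm_add₃_le).trans (add_le_add_three (hq.norm_mul_mul_star_sub_corner_le w b) ?_ ?_)
  · exact (hq.norm_mul_right_le _).trans (hq.norm_mul_left_le _)
  · exact hq.norm_mul_right_le _

end Projection

-- The square of the function applied to `a` times `t - δ` is `(t - ε)₊`; the `max` in the
-- denominator only keeps it positive where the numerator vanishes anyway.
theorem cutoff_eq_mul_sub_algebraMap_mul [CStarAlgebra A] {a : A}
    (ha : IsSelfAdjoint a) {δ ε : ℝ} (hδε : δ < ε) :
    cutoff ε a = cfc (fun t => √(max (t - ε) 0 / max (t - δ) (ε - δ))) a *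
      (a - algebraMap ℝ A δ) * cfc (fun t => √(max (t - ε) 0 / max (t - δ) (ε - δ))) a := by
  have hden (t : ℝ) : max (t - δ) (ε - δ) ≠ 0 := (lt_max_of_lt_right (sub_pos.2 hδε)).ne'
  have hsub : a - algebraMap ℝ A δ = cfc (fun t => t - δ) a := by
    rw [cfc_sub .., cfc_id' ℝ a, cfc_const δ a]
  rw [hsub, ← cfc_mul .., ← cfc_mul ..]
  refine cfc_congr fun t _ => ?_
  rcases le_or_gt t ε with h | h
  · simp [max_eq_right (sub_nonpos.2 h)]
  · have hε : max (t - ε) 0 = t - ε := max_eq_left (by linarith)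
    have hδ : max (t - δ) (ε - δ) = t - δ := max_eq_left (by linarith)
    rw [hε, hδ, mul_right_comm, Real.mul_self_sqrt (div_nonneg (by linarith) (by linarith)),
      div_mul_cancel₀ _ (by linarith)]

section Order

variable [CStarAlgebra A] [PartialOrder A] [StarOrderedRing A]

open CFC in
theorem exists_norm_sub_mul_mul_star_le_of_le {a b : A} (ha : 0 ≤ a) (hab : a ≤ b) {δ : ℝ}
    (hδ : 0 < δ) : ∃ y : A, ‖a - y * b * star y‖ ≤ δ := by
  set b' := b + algebraMap ℝ A δ
  have hδA : IsStrictlyPositive (algebraMap ℝ A δ) := isStrictlyPositive_algebraMap hδ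
  have hb' : IsStrictlyPositive b' := hδA.nonneg_add (ha.trans hab)
  set y := sqrt a * b' ^ (-(1 / 2) : ℝ)
  have hy : ‖y‖ ≤ 1 :=
    (le_iff_norm_sqrt_mul_rpow a b').1 (hab.trans (le_add_of_nonneg_right hδA.nonneg))
  have hstar : star y = b' ^ (-(1 / 2) : ℝ) * sqrt a := by
    simp [y, star_mul, (IsSelfAdjoint.of_nonneg (sqrt_nonneg a)).star_eq,
      (IsSelfAdjoint.of_nonneg (rpow_nonneg (a := b'))).star_eq]
  have hconj : y * b' * star y = a := by
    rw [hstar, show y * b' * (b' ^ (-(1 / 2) : ℝ) * sqrt a) =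
        sqrt a * (b' ^ (-(1 / 2) : ℝ) * b' * b' ^ (-(1 / 2) : ℝ)) * sqrt a by
      simp only [y, mul_assoc], conjugate_rpow_neg_one_half b', mul_one, sqrt_mul_sqrt_self a]
  refine ⟨y, ?_⟩
  calc ‖a - y * b * star y‖ = ‖δ • (y * star y)‖ := by
        rw [← hconj]; congr 1; simp only [b', Algebra.algebraMap_eq_smul_one]; noncomm_ring
    _ ≤ δ := by
        rw [norm_smul, Real.norm_of_nonneg hδ.le, CStarRing.norm_self_mul_star]
        exact mul_le_of_le_one_right hδ.le (mul_le_one₀ hy (norm_nonneg y) hy)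

theorem CuntzSub.of_le {a b : A} (ha : 0 ≤ a) (hab : a ≤ b) : CuntzSub a b := by
  refine cuntzSub_iff_forall_norm_sub_lt.2 fun ε hε => ?_
  obtain ⟨y, hy⟩ := exists_norm_sub_mul_mul_star_le_of_le ha hab (half_pos hε)
  exact ⟨y, by rw [norm_sub_rev]; linarith⟩

theorem cutoff_nonneg (ε : ℝ) (a : A) : 0 ≤ cutoff ε a :=
  cfc_nonneg fun _ _ => le_max_right _ _

theorem cuntzSub_cutoff_of_norm_sub_lt {a b : A} (ha : IsSelfAdjoint a) (hb : IsSelfAdjoint b)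
    {ε : ℝ} (hab : ‖a - b‖ < ε) : CuntzSub (cutoff ε a) b := by
  set F := cfc (fun t => √(max (t - ε) 0 / max (t - ‖a - b‖) (ε - ‖a - b‖))) a
  have hF : IsSelfAdjoint F := cfc_predicate _ _
  have hle : a - algebraMap ℝ A ‖a - b‖ ≤ b := by
    simpa [add_comm] using (ha.sub hb).le_algebraMap_norm_self
  have hcut : cutoff ε a ≤ F * b * F := by
    rw [cutoff_eq_mul_sub_algebraMap_mul ha hab]
    exact hF.conjugate_le_conjugate hle
  refine (CuntzSub.of_le (cutoff_nonneg ε a) hcut).trans ?_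
  simpa only [hF.star_eq] using CuntzSub.mul_mul_star F b

end Order

open scoped CStarAlgebra in
theorem StarAlgHom.exists_map_eq_zero_norm_sub_le {B : Type*} [CStarAlgebra A] [CStarAlgebra B]
    (π : A →⋆ₐ[ℂ] B) {x : A} (hx : IsSelfAdjoint x) : ∃ c, π c = 0 ∧ ‖x - c‖ ≤ ‖π x‖ := by
  rcases subsingleton_or_nontrivial B with hB | hB
  · exact ⟨x, Subsingleton.elim _ _, by simp⟩
  set r := ‖π x‖
  -- `c` is the part of `x` outside `[-r, r]`, which `π` kills because `σ(π x) ⊆ [-r, r]`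
  let clamp (t : ℝ) : ℝ := max (min t r) (-r)
  refine ⟨x - cfc clamp x, ?_, ?_⟩
  · rw [map_sub, StarAlgHom.map_cfc π clamp x, sub_eq_zero]
    nth_rw 1 [← cfc_id' ℝ (π x)]
    refine cfc_congr fun t ht => ?_
    have ht' : |t| ≤ r := by simpa using spectrum.norm_le_norm_of_mem ht
    simp [clamp, min_eq_left (le_of_abs_le ht'), max_eq_left (neg_le_of_abs_le ht')]
  · rw [sub_sub_cancel]
    refine norm_cfc_le (norm_nonneg _) fun t _ => ?_
    simp only [clamp, Real.norm_eq_abs, abs_le]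
    exact ⟨le_max_right _ _, max_le (min_le_right t r) (neg_le_self (norm_nonneg _))⟩

theorem corner_cuntzSub_of_quotient_general {B : Type*} [CStarAlgebra A] [CStarAlgebra B]
    [PartialOrder A] [StarOrderedRing A]
    (π : A →⋆ₐ[ℂ] B) (hsurj : Function.Surjective π)
    (I : TwoSidedIdeal A) (hker : ∀ x : A, π x = 0 ↔ x ∈ I)
    (p : ℕ → A) (hproj : ∀ n, IsSelfAdjoint (p n) ∧ IsIdempotentElem (p n) ∧ p n ∈ I)
    (happrox : ∀ x ∈ I, Tendsto (fun n => p n * x) atTop (nhds x) ∧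
      Tendsto (fun n => x * p n) atTop (nhds x))
    (hqc : ∀ x : A, Tendsto (fun n => ‖p n * x - x * p n‖) atTop (nhds 0))
    (a b : A) (ha : 0 ≤ a) (hb : 0 ≤ b) (h : CuntzSub (π a) (π b)) :
    ∀ ε : ℝ, 0 < ε → ∃ N : ℕ, ∀ n ≥ N,
      CuntzSub (cutoff ε ((1 - p n) * a * (1 - p n))) ((1 - p n) * b * (1 - p n)) := by
  intro ε hε
  obtain ⟨v, hv⟩ := cuntzSub_iff_forall_norm_sub_lt.1 h ε hε
  obtain ⟨w, rfl⟩ := hsurj v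
  have hx : IsSelfAdjoint (w * b * star w - a) :=
    (hb.isSelfAdjoint.conjugate w).sub ha.isSelfAdjoint
  obtain ⟨c, hc0, hc⟩ := π.exists_map_eq_zero_norm_sub_le hx
  have hcε : ‖w * b * star w - a - c‖ < ε :=
    hc.trans_lt (by rwa [map_sub, map_mul, map_mul, map_star])
  have hq n : IsStarProjection (1 - p n) := IsStarProjection.one_sub ⟨(hproj n).2.1, (hproj n).1⟩
  have hsmall : Tendsto (fun n => 2 * ‖w‖ * ‖b‖ * ‖p n * w - w * p n‖ + ‖c - p n * c‖)
      atTop (𝓝 0) := by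
    have hpc := tendsto_iff_norm_sub_tendsto_zero.1 ((happrox c ((hker c).1 hc0)).1)
    simpa [norm_sub_rev] using ((hqc w).const_mul (2 * ‖w‖ * ‖b‖)).add hpc
  obtain ⟨N, hN⟩ := eventually_atTop.1 (hsmall.eventually (gt_mem_nhds (sub_pos.2 hcε)))
  refine ⟨N, fun n hn => ?_⟩
  have hT := (hq n).norm_corner_sub_le w b a c
  rw [show w * (1 - p n) - (1 - p n) * w = p n * w - w * p n by noncomm_ring,
    show (1 - p n) * c = c - p n * c by noncomm_ring] at hT
  refine (cuntzSub_cutoff_of_norm_sub_lt (ha.isSelfAdjoint.conjugate_self (hq n).isSelfAdjoint)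
    ((hb.isSelfAdjoint.conjugate_self (hq n).isSelfAdjoint).conjugate ((1 - p n) * w)) ?_).trans
    (CuntzSub.mul_mul_star _ _)
  rw [norm_sub_rev]
  linarith [hN n hn]

/-- If `π(a) ≾ π(b)` in `A/I`, where `I = ker π` has a quasi-central approximate unit
`(pₙ)` of projections, then for every `ε > 0` eventually
`((1-pₙ) a (1-pₙ) - ε)₊ ≾ (1-pₙ) b (1-pₙ)` in `A`. -/
theorem corner_cuntzSub_of_quotient {B : Type*} [CStarAlgebra A] [CStarAlgebra B]
    [PartialOrder A] [StarOrderedRing A]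
    (π : A →⋆ₐ[ℂ] B) (hsurj : Function.Surjective π)
    (I : TwoSidedIdeal A) (hIc : IsClosed (I : Set A)) (hker : ∀ x : A, π x = 0 ↔ x ∈ I)
    (p : ℕ → A) (hproj : ∀ n, IsSelfAdjoint (p n) ∧ IsIdempotentElem (p n) ∧ p n ∈ I)
    (happrox : ∀ x ∈ I, Tendsto (fun n => p n * x) atTop (nhds x) ∧
      Tendsto (fun n => x * p n) atTop (nhds x))
    (hqc : ∀ x : A, Tendsto (fun n => ‖p n * x - x * p n‖) atTop (nhds 0))
    (a b : A) (ha : 0 ≤ a) (hb : 0 ≤ b) (h : CuntzSub (π a) (π b)) :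
    ∀ ε : ℝ, 0 < ε → ∃ N : ℕ, ∀ n ≥ N,
      CuntzSub (cutoff ε ((1 - p n) * a * (1 - p n))) ((1 - p n) * b * (1 - p n)) :=
  corner_cuntzSub_of_quotient_general π hsurj I hker p hproj happrox hqc a b ha hb h
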